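/- arXiv:2405.19172 — 4 statements merged into one kernel-verified Lean document; each statement's English description precedes it below -/
import Mathlib

section
/- For a simple graph G on n ≥ 2 vertices with cc(G) connected components, the generalized Sierpiński graph S(G,t) has exactly (n^t (cc(G) − 1) + n − cc(G)) / (n − 1) connected components. -/
variable {V : Type*}

/-- Adjacency of the generalized Sierpiński graph `S(G,t)` on words of length `t`:
`u` and `v` are adjacent iff there is an index `i` with `u j = v j` for `j < i`,
`u i` adjacent to `v i` in `G`, and `u j = v i`, `v j = u i` for `j > i`. -/
def sierAdj (G : SimpleGraph V) (t : ℕ) (u v : Fin t → V) : Prop :=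
  ∃ i : Fin t, (∀ j, j < i → u j = v j) ∧ G.Adj (u i) (v i) ∧
    ∀ j, i < j → u j = v i ∧ v j = u i

/-- The generalized Sierpiński graph `S(G,t)`. -/
def sier (G : SimpleGraph V) (t : ℕ) : SimpleGraph (Fin t → V) where
  Adj := sierAdj G t
  symm := ⟨by
    rintro u v ⟨i, h1, h2, h3⟩
    exact ⟨i, fun j hj => (h1 j hj).symm, h2.symm,
      fun j hj => ⟨(h3 j hj).2, (h3 j hj).1⟩⟩⟩
  loopless := ⟨by
    rintro u ⟨i, h1, h2, h3⟩
    exact G.irrefl h2⟩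

/-- `linkingAt G t p u v` : `uv` is a linking edge of `S(G,t)` appearing at
(0-indexed) position `p < t - 1`; in the paper's terminology this linking edge is
produced at step `t - p`, and its contraction is a vertex contracted at step `t - p`. -/
def linkingAt (G : SimpleGraph V) (t p : ℕ) (u v : Fin t → V) : Prop :=
  ∃ i : Fin t, i.val = p ∧ i.val + 1 < t ∧ (∀ j, j < i → u j = v j) ∧
    G.Adj (u i) (v i) ∧ ∀ j, i < j → u j = v i ∧ v j = u i

/-- `uv` is a linking edge of `S(G,t)` (an edge appearing at some step `≥ 2`). -/
def linking (G : SimpleGraph V) (t : ℕ) (u v : Fin t → V) : Prop :=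
  ∃ p, linkingAt G t p u v

/-- The equivalence relation on words generated by identifying the two endpoints
of each linking edge. -/
def gasketSetoid (G : SimpleGraph V) (t : ℕ) : Setoid (Fin t → V) :=
  Relation.EqvGen.setoid (linking G t)

/-- The generalized Sierpiński gasket graph `S[G,t]`, obtained from `S(G,t)` by
contracting all linking edges. -/
def gasket (G : SimpleGraph V) (t : ℕ) :
    SimpleGraph (Quotient (gasketSetoid G t)) where
  Adj x y := x ≠ y ∧ ∃ u v, Quotient.mk (gasketSetoid G t) u = x ∧
    Quotient.mk (gasketSetoid G t) v = y ∧ sierAdj G t u v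
  symm := ⟨by
    rintro x y ⟨hxy, u, v, hu, hv, h⟩
    exact ⟨hxy.symm, v, u, hv, hu, (sier G t).adj_symm h⟩⟩
  loopless := ⟨fun _ h => h.1 rfl⟩

/-- The expanded word `i j j ... j`; for `ij ∈ E(G)` its class in `S[G,t]` is the
contracted vertex `{i,j}_t`. -/
def topWord (t : ℕ) (i j : V) : Fin t → V := fun k => if k.val = 0 then i else j

/-!
Write a word of length `t + 1` as `x :: u`. An edge of `S(G,t+1)` either keeps the first letter
and is an edge of `S(G,t)` between the tails, or is the edge `x y…y — y x…x` for an edge `xy` of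
`G`. The words all of whose letters lie in one component `C` of `G` form a single component of
`S(G,t)`, the core of `C`, and edges of the second kind only join words with core tails. So the
components of `S(G,t+1)` are the `c` cores together with the pairs `(x, κ)` of a letter `x` and a
component `κ` of `S(G,t)` other than the core of the component of `x`. This gives
`N(t+1) = c + n (N(t) - 1)` with `N(0) = 1`, whose solution is the stated formula.
-/

theorem Nat.card_subtype_ne {α : Type*} [Finite α] (a : α) :
    Nat.card {x // x ≠ a} = Nat.card α - 1 := by
  classical
  have := Fintype.ofFinite α
  rw [Nat.card_eq_fintype_card, Nat.card_eq_fintype_card, Fintype.card_subtype_compl,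
    Fintype.card_subtype_eq]

open SimpleGraph

section

variable {G : SimpleGraph V}

theorem sierAdj_cons_cons_iff {t : ℕ} {x y : V} {u v : Fin t → V} :
    sierAdj G (t + 1) (Fin.cons x u) (Fin.cons y v) ↔
      x = y ∧ sierAdj G t u v ∨ G.Adj x y ∧ (∀ j, u j = y) ∧ ∀ j, v j = x := by
  constructor
  · rintro ⟨i, hlt, hadj, hgt⟩
    cases i using Fin.cases with
    | zero =>
      exact Or.inr ⟨by simpa using hadj, fun j => by simpa using (hgt j.succ j.succ_pos).1,
        fun j => by simpa using (hgt j.succ j.succ_pos).2⟩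
    | succ i =>
      refine Or.inl ⟨by simpa using hlt 0 i.succ_pos, i,
        fun j hj => by simpa using hlt j.succ (Fin.succ_lt_succ_iff.2 hj), by simpa using hadj,
        fun j hj => by simpa using hgt j.succ (Fin.succ_lt_succ_iff.2 hj)⟩
  · rintro (⟨rfl, i, hlt, hadj, hgt⟩ | ⟨hadj, hu, hv⟩)
    · refine ⟨i.succ, fun j hj => ?_, by simpa using hadj, fun j hj => ?_⟩
      · cases j using Fin.cases with
        | zero => rfl
        | succ j => simpa using hlt j (Fin.succ_lt_succ_iff.1 hj)
      · cases j using Fin.cases with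
        | zero => exact absurd hj (Fin.not_lt_zero _)
        | succ j => simpa using hgt j (Fin.succ_lt_succ_iff.1 hj)
    · refine ⟨0, fun j hj => absurd hj (Fin.not_lt_zero _), by simpa using hadj, fun j hj => ?_⟩
      cases j using Fin.cases with
      | zero => exact absurd hj (lt_irrefl _)
      | succ j => simp [hu, hv]

variable (G) in
def sierConsHom (t : ℕ) (x : V) : sier G t →g sier G (t + 1) where
  toFun u := Fin.cons x u
  map_rel' h := sierAdj_cons_cons_iff.2 (Or.inl ⟨rfl, h⟩)

@[simp]
theorem sierConsHom_apply (t : ℕ) (x : V) (u : Fin t → V) :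
    sierConsHom G t x u = Fin.cons x u :=
  rfl

theorem connectedComponentMk_eq_of_sierAdj {t : ℕ} {u v : Fin t → V} (h : sierAdj G t u v)
    (j : Fin t) : G.connectedComponentMk (u j) = G.connectedComponentMk (v j) := by
  obtain ⟨i, hlt, hadj, hgt⟩ := h
  rcases lt_trichotomy j i with hj | rfl | hj
  · rw [hlt j hj]
  · exact ConnectedComponent.connectedComponentMk_eq_of_adj hadj
  · rw [(hgt j hj).1, (hgt j hj).2]
    exact (ConnectedComponent.connectedComponentMk_eq_of_adj hadj).symm

theorem connectedComponentMk_eq_of_sier_reachable {t : ℕ} {u v : Fin t → V}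
    (h : (sier G t).Reachable u v) (j : Fin t) :
    G.connectedComponentMk (u j) = G.connectedComponentMk (v j) := by
  rw [reachable_iff_reflTransGen] at h
  induction h with
  | refl => rfl
  | tail _ hadj ih => exact ih.trans (connectedComponentMk_eq_of_sierAdj hadj j)

theorem sier_reachable_of_forall_mem {C : G.ConnectedComponent} {t : ℕ} {u v : Fin t → V}
    (hu : ∀ j, G.connectedComponentMk (u j) = C) (hv : ∀ j, G.connectedComponentMk (v j) = C) :
    (sier G t).Reachable u v := by
  induction t with
  | zero => rw [Subsingleton.elim u v]
  | succ t ih =>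
    have hwalk : ∀ x y, G.Walk x y → G.connectedComponentMk x = C →
        ∀ u' v' : Fin t → V, (∀ j, G.connectedComponentMk (u' j) = C) →
          (∀ j, G.connectedComponentMk (v' j) = C) →
          (sier G (t + 1)).Reachable (Fin.cons x u') (Fin.cons y v') := by
      intro x y p
      induction p with
      | nil => exact fun _ u' v' hu' hv' => (ih hu' hv').map (sierConsHom G t _)
      | @cons x z y hxz _ ihp =>
        intro hx u' v' hu' hv'
        have hz : G.connectedComponentMk z = C :=
          (ConnectedComponent.connectedComponentMk_eq_of_adj hxz).symm.trans hx
        have hedge : (sier G (t + 1)).Adj (Fin.cons x fun _ => z) (Fin.cons z fun _ => x) :=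
          sierAdj_cons_cons_iff.2 (Or.inr ⟨hxz, fun _ => rfl, fun _ => rfl⟩)
        exact (((ih hu' fun _ => hz).map (sierConsHom G t x)).trans hedge.reachable).trans
          (ihp hz _ v' (fun _ => hx) hv')
    rw [← Fin.cons_self_tail u, ← Fin.cons_self_tail v]
    exact hwalk _ _ (ConnectedComponent.exact ((hu 0).trans (hv 0).symm)).some (hu 0) _ _
      (fun j => hu j.succ) (fun j => hv j.succ)

variable (G) in
noncomputable def sierCore (t : ℕ) (C : G.ConnectedComponent) : (sier G t).ConnectedComponent :=
  (sier G t).connectedComponentMk fun _ => C.out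

theorem sier_connectedComponentMk_eq_sierCore_iff {t : ℕ} {C : G.ConnectedComponent}
    {u : Fin t → V} :
    (sier G t).connectedComponentMk u = sierCore G t C ↔ ∀ j, G.connectedComponentMk (u j) = C := by
  constructor
  · intro h j
    exact (connectedComponentMk_eq_of_sier_reachable (ConnectedComponent.exact h) j).trans C.out_eq
  · exact fun hu => ConnectedComponent.sound (sier_reachable_of_forall_mem hu fun _ => C.out_eq)

theorem exists_eq_cons_of_sier_reachable_cons {t : ℕ} {x : V} {u : Fin t → V}
    {w : Fin (t + 1) → V}
    (hu : (sier G t).connectedComponentMk u ≠ sierCore G t (G.connectedComponentMk x))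
    (h : (sier G (t + 1)).Reachable (Fin.cons x u) w) :
    ∃ u', w = Fin.cons x u' ∧ (sier G t).Reachable u u' := by
  rw [reachable_iff_reflTransGen] at h
  induction h with
  | refl => exact ⟨u, rfl, Reachable.refl _⟩
  | @tail w w' _ hadj ih =>
    obtain ⟨u', rfl, hreach⟩ := ih
    rw [← Fin.cons_self_tail w'] at hadj ⊢
    rcases sierAdj_cons_cons_iff.1 hadj with ⟨rfl, hadj'⟩ | ⟨hxy, hu', -⟩
    · exact ⟨_, rfl, hreach.trans (Adj.reachable hadj')⟩
    · refine absurd ?_ hu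
      rw [ConnectedComponent.sound hreach, sier_connectedComponentMk_eq_sierCore_iff]
      exact fun j => (hu' j).symm ▸ (ConnectedComponent.connectedComponentMk_eq_of_adj hxy).symm

theorem sierCore_ne_map_sierConsHom {t : ℕ} {x : V} (C : G.ConnectedComponent)
    {κ : (sier G t).ConnectedComponent} (hκ : κ ≠ sierCore G t (G.connectedComponentMk x)) :
    sierCore G (t + 1) C ≠ κ.map (sierConsHom G t x) := by
  induction κ using ConnectedComponent.ind with
  | h u =>
    rw [ConnectedComponent.map_mk, ne_comm, Ne, sier_connectedComponentMk_eq_sierCore_iff]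
    intro hcons
    have hx : G.connectedComponentMk x = C := hcons 0
    exact hκ (sier_connectedComponentMk_eq_sierCore_iff.2 fun j => (hcons j.succ).trans hx.symm)

variable (G) in
noncomputable def sierComponentsSuccEquiv (t : ℕ) :
    G.ConnectedComponent ⊕
        (Σ x : V,
          {κ : (sier G t).ConnectedComponent // κ ≠ sierCore G t (G.connectedComponentMk x)}) ≃
      (sier G (t + 1)).ConnectedComponent :=
  Equiv.ofBijective
    (Sum.elim (sierCore G (t + 1)) fun p => p.2.1.map (sierConsHom G t p.1)) <| by
    constructor
    · rintro (C | ⟨x, κ, hκ⟩) (C' | ⟨y, κ', hκ'⟩) h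
      · exact congrArg Sum.inl
          (C.out_eq.symm.trans (sier_connectedComponentMk_eq_sierCore_iff.1 h 0))
      · exact absurd h (sierCore_ne_map_sierConsHom C hκ')
      · exact absurd h.symm (sierCore_ne_map_sierConsHom C' hκ)
      · induction κ using ConnectedComponent.ind with | h u => ?_
        induction κ' using ConnectedComponent.ind with | h v => ?_
        simp only [Sum.elim_inr, ConnectedComponent.map_mk, sierConsHom_apply] at h
        obtain ⟨u', he, hr⟩ := exists_eq_cons_of_sier_reachable_cons hκ (ConnectedComponent.exact h)
        obtain ⟨rfl, rfl⟩ := Fin.cons_injective2 he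
        simp only [ConnectedComponent.sound hr]
    · intro κ
      induction κ using ConnectedComponent.ind with
      | h w =>
        by_cases hw : (sier G t).connectedComponentMk (Fin.tail w) =
            sierCore G t (G.connectedComponentMk (w 0))
        · refine ⟨Sum.inl (G.connectedComponentMk (w 0)), ?_⟩
          rw [Sum.elim_inl, eq_comm, sier_connectedComponentMk_eq_sierCore_iff]
          rw [sier_connectedComponentMk_eq_sierCore_iff] at hw
          intro j
          cases j using Fin.cases with
          | zero => rfl
          | succ j => exact hw j
        · refine ⟨Sum.inr ⟨w 0, _, hw⟩, ?_⟩
          rw [Sum.elim_inr, ConnectedComponent.map_mk]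
          exact congrArg _ (Fin.cons_self_tail w)

theorem card_sier_connectedComponent_zero :
    Nat.card (sier G 0).ConnectedComponent = 1 :=
  Nat.card_unique

theorem card_sier_connectedComponent_succ [Fintype V] (t : ℕ) :
    Nat.card (sier G (t + 1)).ConnectedComponent = Nat.card G.ConnectedComponent +
      Fintype.card V * (Nat.card (sier G t).ConnectedComponent - 1) := by
  rw [← Nat.card_congr (sierComponentsSuccEquiv G t), Nat.card_sum, Nat.card_sigma]
  simp [Nat.card_subtype_ne]

theorem card_sier_connectedComponent_mul [Fintype V] [Nonempty V] (t : ℕ) :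
    Nat.card (sier G t).ConnectedComponent * (Fintype.card V - 1) =
      Fintype.card V ^ t * (Nat.card G.ConnectedComponent - 1) + Fintype.card V -
        Nat.card G.ConnectedComponent := by
  set n := Fintype.card V
  set c := Nat.card G.ConnectedComponent
  have hc : 1 ≤ c := Nat.card_pos
  have hcn : c ≤ n :=
    (Nat.card_le_card_of_surjective _ Quot.mk_surjective).trans_eq Nat.card_eq_fintype_card
  have hn : 1 ≤ n := hc.trans hcn
  induction t with
  | zero => rw [card_sier_connectedComponent_zero, pow_zero, one_mul]; omega
  | succ t ih =>
    have hN : 1 ≤ Nat.card (sier G t).ConnectedComponent := Nat.card_pos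
    rw [card_sier_connectedComponent_succ]
    zify [hc, hn, hN, hcn.trans (Nat.le_add_left n (n ^ t * (c - 1))),
      hcn.trans (Nat.le_add_left n (n ^ (t + 1) * (c - 1)))] at ih ⊢
    linear_combination (n : ℤ) * ih

end

theorem stmt_1_general [Fintype V] (G : SimpleGraph V) (n c t : ℕ)
    (hn : n = Fintype.card V) (h2 : 2 ≤ n)
    (hc : c = Nat.card G.ConnectedComponent) :
    Nat.card (sier G t).ConnectedComponent = (n ^ t * (c - 1) + n - c) / (n - 1) := by
  have : Nonempty V := Fintype.card_pos_iff.1 (by omega)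
  subst hn hc
  exact (Nat.div_eq_of_eq_mul_left (by omega) (card_sier_connectedComponent_mul t).symm).symm

/-- `S(G,t)` has `(n^t(cc(G)−1) + n − cc(G))/(n−1)` connected components. -/
theorem stmt_1 [Fintype V] (G : SimpleGraph V) (n c t : ℕ)
    (hn : n = Fintype.card V) (h2 : 2 ≤ n) (ht : 1 ≤ t)
    (hc : c = Nat.card G.ConnectedComponent) :
    Nat.card (sier G t).ConnectedComponent = (n ^ t * (c - 1) + n - c) / (n - 1) :=
  stmt_1_general G n c t hn h2 hc
end

section
/- If G is acyclic, then S[G,t] is acyclic for every t ≥ 1. -/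
/-!
`S(G,t+1)` consists of one copy of `S(G,t)` for each vertex of `G`, with a single edge between
the copies `i` and `j` for each edge `ij` of `G`. Gluing acyclic graphs along an acyclic pattern,
with at most one edge over each edge of the pattern, produces an acyclic graph, so `S(G,t)` is
acyclic by induction on `t`. The gasket `S[G,t]` arises from `S(G,t)` by contracting edges, and
contracting edges of a forest yields a forest: every edge of the contraction lifts to an edge of
the forest, which is a bridge there, and a path avoiding it downstairs lifts to a path avoiding it
upstairs because the contracted classes are connected by edges other than it.
-/

variable {V : Type*}

namespace SimpleGraph

variable {W U X : Type*}

theorem Reachable.lift {K : SimpleGraph W} {B : SimpleGraph U} (f : W → U)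
    (hf : ∀ a b, K.Adj a b → B.Reachable (f a) (f b)) {a b : W} (h : K.Reachable a b) :
    B.Reachable (f a) (f b) := by
  rw [reachable_iff_reflTransGen] at h ⊢
  exact Relation.ReflTransGen.lift' f (fun c d hcd => (reachable_iff_reflTransGen _ _).mp
    (hf c d hcd)) _ _ h

theorem Reachable.of_adj_closed {K : SimpleGraph W} {P : W → Prop}
    (hP : ∀ a b, K.Adj a b → P a → P b) {a b : W} (h : K.Reachable a b) (ha : P a) : P b := by
  rw [reachable_iff_reflTransGen] at h
  induction h with
  | refl => exact ha
  | tail _ hcd ih => exact hP _ _ hcd ih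

theorem IsAcyclic.eq_of_reachable_deleteIncidenceSet {B : SimpleGraph U} (hB : B.IsAcyclic)
    {x y y' : U} (hy : B.Adj x y) (hy' : B.Adj x y')
    (h : (B.deleteIncidenceSet x).Reachable y y') : y = y' := by
  by_contra hne
  refine isAcyclic_iff_forall_adj_isBridge.mp hB hy ?_
  have hxy' : (B.deleteEdges {s(x, y)}).Adj x y' := by simp [hy', Ne.symm hne, hy'.ne.symm]
  have hle : B.deleteIncidenceSet x ≤ B.deleteEdges {s(x, y)} := fun p q hpq => by
    rw [deleteIncidenceSet_adj] at hpq
    simp [hpq.1, hpq.2.1, hpq.2.2]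
  exact hxy'.reachable.trans (h.mono hle).symm

theorem IsAcyclic.contract {K : SimpleGraph W} (hK : K.IsAcyclic) {r : W → W → Prop}
    (hr : ∀ a b, r a b → K.Adj a b) {H : SimpleGraph (Quotient (Relation.EqvGen.setoid r))}
    (hH : ∀ x y, H.Adj x y → ∃ a b, Quotient.mk _ a = x ∧ Quotient.mk _ b = y ∧ K.Adj a b) :
    H.IsAcyclic := by
  rw [isAcyclic_iff_forall_adj_isBridge]
  intro x y hxy
  obtain ⟨a, b, rfl, rfl, hab⟩ := hH x y hxy
  intro hreach
  have hclass : Relation.EqvGen.setoid r ≤ (K.deleteEdges {s(a, b)}).reachableSetoid := by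
    refine Setoid.eqvGen_le fun c d hcd => Adj.reachable ?_
    refine deleteEdges_adj.mpr ⟨hr c d hcd, fun he => hxy.ne ?_⟩
    have hcd' : Quotient.mk (Relation.EqvGen.setoid r) c = Quotient.mk _ d :=
      Quotient.sound (Relation.EqvGen.rel _ _ hcd)
    rcases Sym2.eq_iff.mp (Set.mem_singleton_iff.mp he) with ⟨rfl, rfl⟩ | ⟨rfl, rfl⟩
    exacts [hcd', hcd'.symm]
  have hout (c : W) := hclass (Quotient.mk_out (s := Relation.EqvGen.setoid r) c)
  refine isAcyclic_iff_forall_adj_isBridge.mp hK hab ?_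
  refine (hout a).symm.trans ((hreach.lift Quotient.out fun x' y' hx'y' => ?_).trans (hout b))
  obtain ⟨hadj, hne⟩ := deleteEdges_adj.mp hx'y'
  obtain ⟨c, d, rfl, rfl, hcd⟩ := hH _ _ hadj
  refine (hout c).trans ((Adj.reachable ?_).trans (hout d).symm)
  refine deleteEdges_adj.mpr ⟨hcd, fun he => hne ?_⟩
  simpa using congrArg (Sym2.map (Quotient.mk _)) (Set.mem_singleton_iff.mp he)

/-- `K` is glued from copies of `H`, one over each vertex of `B`: `f a` is the copy containing `a`
and `g a` its position in that copy, and each edge of `B` carries at most one edge of `K`. -/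
structure IsGluing (K : SimpleGraph W) (B : SimpleGraph U) (H : SimpleGraph X) (f : W → U)
    (g : W → X) : Prop where
  eq_of_map_eq : ∀ {a b}, f a = f b → g a = g b → a = b
  adj_of_map_eq : ∀ {a b}, K.Adj a b → f a = f b → H.Adj (g a) (g b)
  adj_of_map_ne : ∀ {a b}, K.Adj a b → f a ≠ f b → B.Adj (f a) (f b)
  eq_of_adj_of_map_ne : ∀ {a b c d}, K.Adj a b → K.Adj c d → f a ≠ f b → f a = f c → f b = f d →
    a = c

namespace IsGluing

variable {K : SimpleGraph W} {B : SimpleGraph U} {H : SimpleGraph X} {f : W → U} {g : W → X}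

theorem isBridge_of_map_ne (hK : IsGluing K B H f g) (hB : B.IsAcyclic) {a b : W}
    (hab : K.Adj a b) (hne : f a ≠ f b) : K.IsBridge s(a, b) := by
  intro hreach
  refine isAcyclic_iff_forall_adj_isBridge.mp hB (hK.adj_of_map_ne hab hne)
    (hreach.lift f fun c d hcd => ?_)
  obtain ⟨hcd, hcd_ne⟩ := deleteEdges_adj.mp hcd
  by_cases hfcd : f c = f d
  · rw [hfcd]
  refine (deleteEdges_adj.mpr ⟨hK.adj_of_map_ne hcd hfcd, fun he => hcd_ne ?_⟩).reachable
  rcases Sym2.eq_iff.mp (Set.mem_singleton_iff.mp he) with ⟨hca, hdb⟩ | ⟨hcb, hda⟩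
  · rw [hK.eq_of_adj_of_map_ne hcd hab hfcd hca hdb,
      hK.eq_of_adj_of_map_ne hcd.symm hab.symm (Ne.symm hfcd) hdb hca]
    rfl
  · rw [hK.eq_of_adj_of_map_ne hcd hab.symm hfcd hcb hda,
      hK.eq_of_adj_of_map_ne hcd.symm hab (Ne.symm hfcd) hda hcb]
    exact Set.mem_singleton_iff.mpr Sym2.eq_swap

theorem eq_of_reachable_deleteIncidenceSet (hK : IsGluing K B H f g) (hB : B.IsAcyclic)
    {c d c' d' : W} (hcd : K.Adj c d) (hc'd' : K.Adj c' d') (hc : f c = f c')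
    (hd : f d ≠ f c) (hd' : f d' ≠ f c')
    (h : (B.deleteIncidenceSet (f c)).Reachable (f d) (f d')) : c = c' := by
  have hdd' : f d = f d' := hB.eq_of_reachable_deleteIncidenceSet
    (hK.adj_of_map_ne hcd (Ne.symm hd)) (hc ▸ hK.adj_of_map_ne hc'd' (Ne.symm hd')) h
  exact hK.eq_of_adj_of_map_ne hcd hc'd' (Ne.symm hd) hc hdd'

theorem isBridge_of_map_eq (hK : IsGluing K B H f g) (hB : B.IsAcyclic) (hH : H.IsAcyclic)
    {a b : W} (hab : K.Adj a b) (heq : f a = f b) : K.IsBridge s(a, b) := by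
  intro hreach
  set He := H.deleteEdges {s(g a, g b)}
  -- `P w`: either `w` lies in the copy of `a` and is reachable from `a` inside it without `ab`,
  -- or `w` lies beyond an edge `cd` leaving that copy at a vertex `c` so reachable.
  let P : W → Prop := fun w => (f w = f a → He.Reachable (g a) (g w)) ∧
    (f w ≠ f a → ∃ c d, K.Adj c d ∧ f c = f a ∧ f d ≠ f a ∧ He.Reachable (g a) (g c) ∧
      (B.deleteIncidenceSet (f a)).Reachable (f d) (f w))
  have hP : ∀ c d, (K.deleteEdges {s(a, b)}).Adj c d → P c → P d := by
    rintro c d hcd ⟨hPc, hPc'⟩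
    obtain ⟨hcd, hcd_ne⟩ := deleteEdges_adj.mp hcd
    by_cases hc : f c = f a <;> by_cases hd : f d = f a
    · refine ⟨fun _ => (hPc hc).trans (Adj.reachable ?_), fun h => absurd hd h⟩
      refine deleteEdges_adj.mpr ⟨hK.adj_of_map_eq hcd (hc.trans hd.symm), fun he => hcd_ne ?_⟩
      rcases Sym2.eq_iff.mp (Set.mem_singleton_iff.mp he) with ⟨hca, hdb⟩ | ⟨hcb, hda⟩
      · rw [hK.eq_of_map_eq hc hca, hK.eq_of_map_eq (hd.trans heq) hdb]
        rfl
      · rw [hK.eq_of_map_eq (hc.trans heq) hcb, hK.eq_of_map_eq hd hda]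
        exact Set.mem_singleton_iff.mpr Sym2.eq_swap
    · exact ⟨fun h => absurd h hd, fun _ => ⟨c, d, hcd, hc, hd, hPc hc, .refl _⟩⟩
    · obtain ⟨c', d', hc'd', hc', hd', hreach', hBc⟩ := hPc' hc
      refine ⟨fun _ => ?_, fun h => absurd hd h⟩
      rwa [← hK.eq_of_reachable_deleteIncidenceSet hB hc'd' hcd.symm (hc'.trans hd.symm)
        (hc'.symm ▸ hd') (fun h => hc (h.trans hd)) (hc'.symm ▸ hBc)]
    · obtain ⟨c', d', hc'd', hc', hd', hreach', hBc⟩ := hPc' hc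
      refine ⟨fun h => absurd h hd, fun _ => ⟨c', d', hc'd', hc', hd', hreach', hBc.trans ?_⟩⟩
      by_cases hfcd : f c = f d
      · rw [hfcd]
      · exact (deleteIncidenceSet_adj.mpr ⟨hK.adj_of_map_ne hcd hfcd, hc, hd⟩).reachable
  exact isAcyclic_iff_forall_adj_isBridge.mp hH (hK.adj_of_map_eq hab heq)
    ((hreach.of_adj_closed hP ⟨fun _ => .refl _, fun h => absurd rfl h⟩).1 heq.symm)

theorem isAcyclic (hK : IsGluing K B H f g) (hB : B.IsAcyclic) (hH : H.IsAcyclic) :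
    K.IsAcyclic := by
  refine isAcyclic_iff_forall_adj_isBridge.mpr fun a b hab => ?_
  by_cases heq : f a = f b
  exacts [hK.isBridge_of_map_eq hB hH hab heq, hK.isBridge_of_map_ne hB hab heq]

end IsGluing

end SimpleGraph

open SimpleGraph

theorem sierAdj_succ_iff (G : SimpleGraph V) (t : ℕ) (w w' : Fin (t + 1) → V) :
    sierAdj G (t + 1) w w' ↔
      (G.Adj (w 0) (w' 0) ∧ (∀ k, Fin.tail w k = w' 0) ∧ ∀ k, Fin.tail w' k = w 0) ∨
      (w 0 = w' 0 ∧ sierAdj G t (Fin.tail w) (Fin.tail w')) := by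
  constructor
  · rintro ⟨i, h1, h2, h3⟩
    rcases Fin.eq_zero_or_eq_succ i with rfl | ⟨k, rfl⟩
    · exact Or.inl ⟨h2, fun k => (h3 k.succ (Fin.succ_pos k)).1,
        fun k => (h3 k.succ (Fin.succ_pos k)).2⟩
    · exact Or.inr ⟨h1 0 (Fin.succ_pos k),
        ⟨k, fun j hj => h1 j.succ (by rwa [Fin.succ_lt_succ_iff]), h2,
          fun j hj => h3 j.succ (by rwa [Fin.succ_lt_succ_iff])⟩⟩
  · rintro (⟨h1, h2, h3⟩ | ⟨h0, k, h1, h2, h3⟩)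
    · refine ⟨0, fun j hj => absurd hj (by simp), h1, fun j hj => ?_⟩
      rcases Fin.eq_zero_or_eq_succ j with rfl | ⟨m, rfl⟩
      · exact absurd hj (lt_irrefl _)
      · exact ⟨h2 m, h3 m⟩
    · refine ⟨k.succ, fun j hj => ?_, h2, fun j hj => ?_⟩
      · rcases Fin.eq_zero_or_eq_succ j with rfl | ⟨m, rfl⟩
        · exact h0
        · exact h1 m (Fin.succ_lt_succ_iff.mp hj)
      · rcases Fin.eq_zero_or_eq_succ j with rfl | ⟨m, rfl⟩
        · exact absurd hj (by simp)
        · exact h3 m (Fin.succ_lt_succ_iff.mp hj)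

theorem sier_succ_isGluing (G : SimpleGraph V) (t : ℕ) :
    (sier G (t + 1)).IsGluing G (sier G t) (· 0) Fin.tail where
  eq_of_map_eq {a b} h0 htail := by
    rw [← Fin.cons_self_tail a, ← Fin.cons_self_tail b, h0, htail]
  adj_of_map_eq {a b} hab h0 := by
    rcases (sierAdj_succ_iff G t a b).mp hab with ⟨hG, -, -⟩ | ⟨-, h⟩
    exacts [absurd (h0 ▸ hG) (G.irrefl), h]
  adj_of_map_ne {a b} hab hne := by
    rcases (sierAdj_succ_iff G t a b).mp hab with ⟨hG, -, -⟩ | ⟨h0, -⟩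
    exacts [hG, absurd h0 hne]
  eq_of_adj_of_map_ne {a b c d} hab hcd hne hac hbd := by
    rcases (sierAdj_succ_iff G t a b).mp hab with ⟨-, ha, -⟩ | ⟨h0, -⟩
    · rcases (sierAdj_succ_iff G t c d).mp hcd with ⟨-, hc, -⟩ | ⟨h0, -⟩
      · rw [← Fin.cons_self_tail a, ← Fin.cons_self_tail c, hac]
        congr 1
        funext k
        rw [ha, hc, hbd]
      · exact absurd (hac.trans (h0.trans hbd.symm)) hne
    · exact absurd h0 hne

theorem sier_isAcyclic {G : SimpleGraph V} (hG : G.IsAcyclic) : ∀ t, (sier G t).IsAcyclic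
  | 0 => isAcyclic_iff_forall_adj_isBridge.mpr fun _ _ ⟨i, _⟩ => i.elim0
  | t + 1 => (sier_succ_isGluing G t).isAcyclic hG (sier_isAcyclic hG t)

theorem stmt_4_general (G : SimpleGraph V) (hG : G.IsAcyclic) (t : ℕ) :
    (gasket G t).IsAcyclic :=
  (sier_isAcyclic hG t).contract (fun _ _ ⟨_, i, _, _, h⟩ => ⟨i, h⟩) fun _ _ h => h.2

/-- if `G` is acyclic then `S[G,t]` is acyclic for every `t ≥ 1`. -/
theorem stmt_4 (G : SimpleGraph V) (hG : G.IsAcyclic) (t : ℕ) (ht : 1 ≤ t) :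
    (gasket G t).IsAcyclic :=
  stmt_4_general G hG t
end

section
/- In S[G,t] with t ≥ 3, if two contracted vertices are adjacent, then at least one of them is a vertex obtained by contracting a linking edge at step 2 (i.e., is of the form u_1...u_{t−2}{i,j}_2 with ij ∈ E(G)). -/
variable {V : Type*}

/-- `x` is a contracted vertex of `S[G,t]` (its class contains an endpoint of a linking edge). -/
def contractedVtx (G : SimpleGraph V) (t : ℕ) (x : Quotient (gasketSetoid G t)) : Prop :=
  ∃ u v, linking G t u v ∧ Quotient.mk (gasketSetoid G t) u = x

/-- `x` is a vertex of `S[G,t]` contracted at step `s` (the contraction of a linking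
edge at position `t - s`, i.e. of the form `u_1...u_{t-s}{i,j}_s`). -/
def contractedVtxAtStep (G : SimpleGraph V) (t s : ℕ)
    (x : Quotient (gasketSetoid G t)) : Prop :=
  ∃ u v, linkingAt G t (t - s) u v ∧ Quotient.mk (gasketSetoid G t) u = x

/-!
Linking edges form a matching of `S(G,t)`, so a contracted vertex of `S[G,t]` is the class
`{u, w}` of the two endpoints of one linking edge, and an edge of `S[G,t]` joins classes of
words `u`, `v` that agree everywhere except in their (adjacent) last letters. A linking edge
at a position before `t - 2` leaves its endpoint constant on the positions `t - 2` and
`t - 1`. If this happened for both `u` and `v`, their last letters would equal their common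
letter at position `t - 2`, contradicting adjacency.
-/

section Linking

variable {G : SimpleGraph V} {t p q : ℕ} {u v w : Fin t → V}

theorem linkingAt_symm (h : linkingAt G t p u v) : linkingAt G t p v u := by
  obtain ⟨i, hp, hi, hpre, hadj, hsuf⟩ := h
  exact ⟨i, hp, hi, fun j hj => (hpre j hj).symm, hadj.symm,
    fun j hj => ⟨(hsuf j hj).2, (hsuf j hj).1⟩⟩

theorem linking_symm (h : linking G t u v) : linking G t v u :=
  let ⟨p, hp⟩ := h; ⟨p, linkingAt_symm hp⟩

theorem linkingAt.succ_lt (h : linkingAt G t p u v) : p + 1 < t := by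
  obtain ⟨i, rfl, hi, -⟩ := h
  exact hi

theorem linkingAt.apply_eq_apply (h : linkingAt G t p u v) {j k : Fin t}
    (hj : p < j.val) (hk : p < k.val) : u j = u k := by
  obtain ⟨i, rfl, -, -, -, hsuf⟩ := h
  rw [(hsuf j hj).1, (hsuf k hk).1]

theorem linkingAt.apply_ne_apply_succ (h : linkingAt G t p u v) (hp : p + 1 < t) :
    u ⟨p, by omega⟩ ≠ u ⟨p + 1, hp⟩ := by
  obtain ⟨i, rfl, -, -, hadj, hsuf⟩ := h
  rw [(hsuf ⟨i.val + 1, hp⟩ (Fin.lt_def.2 (Nat.lt_succ_self _))).1]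
  exact hadj.ne

/-- The position of a linking edge is the last position where its endpoint changes letter. -/
theorem linkingAt.pos_eq (h₁ : linkingAt G t p u v) (h₂ : linkingAt G t q u w) :
    p = q := by
  have key : ∀ {p q v w}, linkingAt G t p u v → linkingAt G t q u w → ¬p < q := by
    intro p q v w h₁ h₂ hpq
    exact h₂.apply_ne_apply_succ h₂.succ_lt (h₁.apply_eq_apply hpq (by simp; omega))
  exact le_antisymm (not_lt.1 (key h₂ h₁)) (not_lt.1 (key h₁ h₂))

theorem linking_unique (h₁ : linking G t u v) (h₂ : linking G t u w) : v = w := by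
  obtain ⟨p, hp⟩ := h₁
  obtain ⟨q, hq⟩ := h₂
  obtain rfl := hp.pos_eq hq
  obtain ⟨i, rfl, hi, hpre₁, -, hsuf₁⟩ := hp
  obtain ⟨i', hii', -, hpre₂, -, hsuf₂⟩ := hq
  obtain rfl : i = i' := (Fin.ext hii').symm
  have hnext : i < ⟨i.val + 1, hi⟩ := Fin.lt_def.2 (Nat.lt_succ_self _)
  funext j
  rcases lt_trichotomy j i with hj | rfl | hj
  · rw [← hpre₁ j hj, hpre₂ j hj]
  · rw [← (hsuf₁ _ hnext).1, (hsuf₂ _ hnext).1]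
  · rw [(hsuf₁ j hj).2, (hsuf₂ j hj).2]

theorem eqvGen_linking (h : Relation.EqvGen (linking G t) u v) :
    u = v ∨ linking G t u v := by
  induction h with
  | rel _ _ h => exact .inr h
  | refl => exact .inl rfl
  | symm _ _ _ ih => exact ih.imp Eq.symm linking_symm
  | trans _ _ _ _ _ ih₁ ih₂ =>
    rcases ih₁ with rfl | h₁
    · exact ih₂
    rcases ih₂ with rfl | h₂
    · exact .inr h₁
    · exact .inl (linking_unique (linking_symm h₁) h₂)

theorem exists_linking_of_contractedVtx {x : Quotient (gasketSetoid G t)}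
    (hx : contractedVtx G t x) (hu : Quotient.mk (gasketSetoid G t) u = x) :
    ∃ w, linking G t u w := by
  obtain ⟨a, b, hab, rfl⟩ := hx
  rcases eqvGen_linking (Quotient.exact hu.symm) with rfl | h
  · exact ⟨b, hab⟩
  · exact ⟨a, linking_symm h⟩

/-- An edge of `S(G,t)` at a position before the last one is a linking edge, so it is
contracted. -/
theorem exists_sierAdj_last_of_gasket_adj {x y : Quotient (gasketSetoid G t)}
    (h : (gasket G t).Adj x y) :
    ∃ u v, Quotient.mk (gasketSetoid G t) u = x ∧ Quotient.mk (gasketSetoid G t) v = y ∧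
      ∃ i : Fin t, i.val + 1 = t ∧ (∀ j, j < i → u j = v j) ∧ G.Adj (u i) (v i) := by
  obtain ⟨hne, u, v, rfl, rfl, i, hpre, hadj, hsuf⟩ := h
  refine ⟨u, v, rfl, rfl, i, ?_, hpre, hadj⟩
  by_contra hlast
  exact hne (Quotient.sound (.rel _ _ ⟨i.val, i, rfl, by omega, hpre, hadj, hsuf⟩))

theorem linkingAt_two_of_adj_last (i : Fin t) (hi : i.val + 1 = t)
    (hpre : ∀ j, j < i → u j = v j) (hadj : G.Adj (u i) (v i))
    (hu : linking G t u w) {w' : Fin t → V} (hv : linking G t v w') :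
    linkingAt G t (t - 2) u w ∨ linkingAt G t (t - 2) v w' := by
  obtain ⟨p, hp⟩ := hu
  obtain ⟨q, hq⟩ := hv
  have hp_lt := hp.succ_lt
  have hq_lt := hq.succ_lt
  by_cases hp2 : p = t - 2
  · exact .inl (hp2 ▸ hp)
  by_cases hq2 : q = t - 2
  · exact .inr (hq2 ▸ hq)
  set j : Fin t := ⟨t - 2, by omega⟩
  have hji : j < i := Fin.lt_def.2 (by simp [j]; omega)
  refine absurd ?_ hadj.ne
  calc u i = u j := hp.apply_eq_apply (by omega) (by simp [j]; omega)
    _ = v j := hpre j hji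
    _ = v i := hq.apply_eq_apply (by simp [j]; omega) (by omega)

end Linking

theorem stmt_6_general (G : SimpleGraph V) (t : ℕ)
    (x y : Quotient (gasketSetoid G t))
    (hx : contractedVtx G t x) (hy : contractedVtx G t y)
    (hadj : (gasket G t).Adj x y) :
    contractedVtxAtStep G t 2 x ∨ contractedVtxAtStep G t 2 y := by
  obtain ⟨u, v, hu, hv, i, hi, hpre, hadj⟩ := exists_sierAdj_last_of_gasket_adj hadj
  obtain ⟨w, hw⟩ := exists_linking_of_contractedVtx hx hu
  obtain ⟨w', hw'⟩ := exists_linking_of_contractedVtx hy hv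
  exact (linkingAt_two_of_adj_last i hi hpre hadj hw hw').imp
    (fun h => ⟨u, w, h, hu⟩) (fun h => ⟨v, w', h, hv⟩)

/-- in `S[G,t]` with `t ≥ 3`, if two contracted vertices are adjacent then
at least one of them is contracted at step `2`. -/
theorem stmt_6 (G : SimpleGraph V) (t : ℕ) (ht : 3 ≤ t)
    (x y : Quotient (gasketSetoid G t))
    (hx : contractedVtx G t x) (hy : contractedVtx G t y)
    (hadj : (gasket G t).Adj x y) :
    contractedVtxAtStep G t 2 x ∨ contractedVtxAtStep G t 2 y :=
  stmt_6_general G t x y hx hy hadj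
end

section
/- In S[G,2], an uncontracted vertex ij (with ij ∉ E(G)) has neighborhood { il : jl ∈ E(G), il ∉ E(G) } ∪ { {i,l}_2 : jl ∈ E(G), il ∈ E(G) }. -/
/-! The only linking edges of `S(G,2)` are the pairs `ab ~ ba` with `ab ∈ E(G)`, so every class
of the contraction is `{ab}` or `{ab, ba}`; in particular an uncontracted word `ij` is alone in its
class. Its neighbours in `S(G,2)` are the words `il` with `jl ∈ E(G)` (an edge changing the first
letter would force `i` adjacent to `j`), and the class of `il` is `il` itself or `{i,l}_2`
according as `il ∉ E(G)` or `il ∈ E(G)`. -/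

variable {V : Type*}

theorem fin_two_eq_iff {α : Type*} {u v : Fin 2 → α} : u = v ↔ u 0 = v 0 ∧ u 1 = v 1 := by
  rw [funext_iff, Fin.forall_fin_two]

section SierpinskiTwo

variable {G : SimpleGraph V}

theorem sierAdj_two_iff {u v : Fin 2 → V} :
    sierAdj G 2 u v ↔
      (G.Adj (u 0) (v 0) ∧ u 1 = v 0 ∧ v 1 = u 0) ∨ (u 0 = v 0 ∧ G.Adj (u 1) (v 1)) := by
  simp [sierAdj, Fin.exists_fin_two, Fin.forall_fin_two]

theorem linking_two_iff {u v : Fin 2 → V} :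
    linking G 2 u v ↔ G.Adj (u 0) (v 0) ∧ u 1 = v 0 ∧ v 1 = u 0 := by
  simp [linking, linkingAt, Fin.exists_fin_two, Fin.forall_fin_two]

theorem eqvGen_linking_two {u v : Fin 2 → V} (h : Relation.EqvGen (linking G 2) u v) :
    v = u ∨ G.Adj (u 0) (u 1) ∧ v 0 = u 1 ∧ v 1 = u 0 := by
  induction h with
  | rel a b hab =>
    obtain ⟨hadj, h1, h2⟩ := linking_two_iff.1 hab
    exact .inr ⟨h1 ▸ hadj, h1.symm, h2⟩
  | refl => exact .inl rfl
  | symm a b _ ih =>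
    rcases ih with rfl | ⟨hadj, h0, h1⟩
    · exact .inl rfl
    · exact .inr ⟨h0 ▸ h1 ▸ hadj.symm, h1.symm, h0.symm⟩
  | trans a b c _ _ ih₁ ih₂ =>
    rcases ih₁ with rfl | ⟨hadj, h0, h1⟩
    · exact ih₂
    · rcases ih₂ with rfl | ⟨-, h0', h1'⟩
      · exact .inr ⟨hadj, h0, h1⟩
      · exact .inl (fin_two_eq_iff.2 ⟨h0'.trans h1, h1'.trans h0⟩)

theorem eq_of_mk_eq_mk_of_not_adj {u v : Fin 2 → V} (hu : ¬ G.Adj (u 0) (u 1))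
    (h : Quotient.mk (gasketSetoid G 2) u = Quotient.mk (gasketSetoid G 2) v) : v = u :=
  (eqvGen_linking_two (Quotient.exact h)).resolve_right fun h => hu h.1

theorem gasket_two_adj_mk_iff {i j : V} (hij : ¬ G.Adj i j) {x : Quotient (gasketSetoid G 2)} :
    (gasket G 2).Adj (Quotient.mk _ ![i, j]) x ↔
      ∃ l, G.Adj j l ∧ x = Quotient.mk (gasketSetoid G 2) ![i, l] := by
  constructor
  · rintro ⟨-, u, v, hu, rfl, huv⟩
    obtain rfl := eq_of_mk_eq_mk_of_not_adj hij hu.symm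
    rcases sierAdj_two_iff.1 huv with ⟨hiv, hjv, -⟩ | ⟨hiv, hjl⟩
    · exact (hij (by rwa [← hjv] at hiv)).elim
    · refine ⟨v 1, hjl, congrArg _ (fin_two_eq_iff.2 ⟨?_, rfl⟩)⟩
      simpa using hiv.symm
  · rintro ⟨l, hjl, rfl⟩
    refine ⟨fun h => hjl.ne ?_, _, _, rfl, rfl, sierAdj_two_iff.2 (.inr ⟨rfl, hjl⟩)⟩
    simpa using (congrFun (eq_of_mk_eq_mk_of_not_adj hij h) 1).symm

end SierpinskiTwo

/-- in `S[G,2]`, the neighborhood of an uncontracted vertex `ij`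
(`ij ∉ E(G)`) is `{ il : jl ∈ E(G), il ∉ E(G) } ∪ { {i,l}_2 : jl ∈ E(G), il ∈ E(G) }`
(the contracted vertex `{i,l}_2` being the class of the word `il`). -/
theorem stmt_18 (G : SimpleGraph V) (i j : V) (hij : ¬ G.Adj i j) :
    (gasket G 2).neighborSet (Quotient.mk (gasketSetoid G 2) ![i, j]) =
      {x | ∃ l, G.Adj j l ∧ ¬ G.Adj i l ∧ x = Quotient.mk (gasketSetoid G 2) ![i, l]} ∪
      {x | ∃ l, G.Adj j l ∧ G.Adj i l ∧ x = Quotient.mk (gasketSetoid G 2) ![i, l]} := by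
  ext x
  rw [SimpleGraph.mem_neighborSet, gasket_two_adj_mk_iff hij]
  constructor
  · rintro ⟨l, hjl, rfl⟩
    by_cases hil : G.Adj i l
    exacts [.inr ⟨l, hjl, hil, rfl⟩, .inl ⟨l, hjl, hil, rfl⟩]
  · rintro (⟨l, hjl, -, rfl⟩ | ⟨l, hjl, -, rfl⟩) <;> exact ⟨l, hjl, rfl⟩
end
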